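/- Generalized Fuchs–van de Graaf inequality: for positive semidefinite complex matrices A and B of the same size, ‖A − B‖₁² + 4·‖A^{1/2} B^{1/2}‖₁² ≤ (Tr[A + B])², where ‖X‖₁ denotes the trace norm and A^{1/2}, B^{1/2} the positive semidefinite square roots. -/

import Mathlib

open scoped BigOperators ComplexOrder

noncomputable section

attribute [local instance] Classical.propDecidable

/-- A density matrix (quantum state): positive semidefinite with unit trace. -/
def IsDensity {ι : Type} [Fintype ι] (ρ : Matrix ι ι ℂ) : Prop :=
  ρ.PosSemidef ∧ ρ.trace = 1

/-- The map `id_R ⊗ Φ` (for linear `Φ`), defined blockwise. -/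
def idTensor {R ι κ : Type} (Φ : Matrix ι ι ℂ → Matrix κ κ ℂ)
    (X : Matrix (R × ι) (R × ι) ℂ) : Matrix (R × κ) (R × κ) ℂ :=
  fun p q => Φ (fun a b => X (p.1, a) (q.1, b)) p.2 q.2

/-- The map `Φ ⊗ id_E` (for linear `Φ`), defined blockwise. -/
def tensorId {ι κ E : Type} (Φ : Matrix ι ι ℂ → Matrix κ κ ℂ)
    (X : Matrix (ι × E) (ι × E) ℂ) : Matrix (κ × E) (κ × E) ℂ :=
  fun p q => Φ (fun a b => X (a, p.2) (b, q.2)) p.1 q.1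

/-- A quantum channel: linear, trace preserving, and completely positive. -/
structure IsChannel {ι κ : Type} [Fintype ι] [Fintype κ]
    (Φ : Matrix ι ι ℂ → Matrix κ κ ℂ) : Prop where
  linear : IsLinearMap ℂ Φ
  tracePres : ∀ X, (Φ X).trace = X.trace
  compPos : ∀ (k : ℕ) (X : Matrix (Fin k × ι) (Fin k × ι) ℂ),
      X.PosSemidef → (idTensor Φ X).PosSemidef

/-- A family of divergences, one for every finite dimension. -/
abbrev DivFam : Type 1 :=
  ∀ (ι : Type) [Fintype ι] [DecidableEq ι], Matrix ι ι ℂ → Matrix ι ι ℂ → EReal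

/-- Data processing: a generalized divergence does not increase under channels. -/
def DivDataProcessing (D : DivFam) : Prop :=
  ∀ (ι κ : Type) [Fintype ι] [DecidableEq ι] [Fintype κ] [DecidableEq κ]
    (Φ : Matrix ι ι ℂ → Matrix κ κ ℂ), IsChannel Φ →
    ∀ ρ σ : Matrix ι ι ℂ, IsDensity ρ → IsDensity σ →
      D κ (Φ ρ) (Φ σ) ≤ D ι ρ σ

/-- Faithfulness: `D(ρ‖ρ) ≤ 0` for every state `ρ`. -/
def DivFaithful (D : DivFam) : Prop :=
  ∀ (ι : Type) [Fintype ι] [DecidableEq ι] (ρ : Matrix ι ι ℂ),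
    IsDensity ρ → D ι ρ ρ ≤ 0

/-- Strong faithfulness: `D(ρ‖σ) = 0` iff `ρ = σ`. -/
def DivStronglyFaithful (D : DivFam) : Prop :=
  ∀ (ι : Type) [Fintype ι] [DecidableEq ι] (ρ σ : Matrix ι ι ℂ),
    IsDensity ρ → IsDensity σ → (D ι ρ σ = 0 ↔ ρ = σ)

/-- The generalized channel divergence `D(N‖M)`. -/
def channelDiv (D : DivFam) {ι κ : Type} [Fintype ι] [DecidableEq ι] [Fintype κ] [DecidableEq κ]
    (N M : Matrix ι ι ℂ → Matrix κ κ ℂ) : EReal :=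
  ⨆ (R : ℕ) (ρ : Matrix (Fin R × ι) (Fin R × ι) ℂ) (_ : IsDensity ρ),
    D (Fin R × κ) (idTensor N ρ) (idTensor M ρ)

/-- The amortized channel divergence `D^𝒜(N‖M)`. -/
def amortizedDiv (D : DivFam) {ι κ : Type} [Fintype ι] [DecidableEq ι] [Fintype κ] [DecidableEq κ]
    (N M : Matrix ι ι ℂ → Matrix κ κ ℂ) : EReal :=
  ⨆ (R : ℕ) (ρ : Matrix (Fin R × ι) (Fin R × ι) ℂ) (σ : Matrix (Fin R × ι) (Fin R × ι) ℂ)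
    (_ : IsDensity ρ) (_ : IsDensity σ),
      D (Fin R × κ) (idTensor N ρ) (idTensor M σ) - D (Fin R × ι) ρ σ

/-- Apply a real function to a Hermitian matrix via the spectral decomposition. -/
def hermFun {ι : Type} [Fintype ι] [DecidableEq ι] (f : ℝ → ℝ) (A : Matrix ι ι ℂ) :
    Matrix ι ι ℂ :=
  if hA : A.IsHermitian then
    (hA.eigenvectorUnitary : Matrix ι ι ℂ) *
      Matrix.diagonal (fun i => (f (hA.eigenvalues i) : ℂ)) *
      star (hA.eigenvectorUnitary : Matrix ι ι ℂ)
  else 0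

/-- Real matrix power via spectral calculus, with the generalized-inverse convention `0 ↦ 0`. -/
def matPow {ι : Type} [Fintype ι] [DecidableEq ι] (A : Matrix ι ι ℂ) (r : ℝ) : Matrix ι ι ℂ :=
  hermFun (fun x => if x = 0 then 0 else Real.rpow x r) A

/-- Matrix base-2 logarithm via spectral calculus, taken on the support. -/
def matLog2 {ι : Type} [Fintype ι] [DecidableEq ι] (A : Matrix ι ι ℂ) : Matrix ι ι ℂ :=
  hermFun (fun x => if x = 0 then 0 else Real.logb 2 x) A

/-- The projection onto the support of a Hermitian matrix. -/
def suppProj {ι : Type} [Fintype ι] [DecidableEq ι] (A : Matrix ι ι ℂ) : Matrix ι ι ℂ :=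
  hermFun (fun x => if x = 0 then 0 else 1) A

/-- `supp ρ ⊆ supp σ`, expressed (for Hermitian matrices) as kernel containment
`ker σ ⊆ ker ρ`. -/
def suppLE {ι : Type} [Fintype ι] (ρ σ : Matrix ι ι ℂ) : Prop :=
  ∀ v : ι → ℂ, σ.mulVec v = 0 → ρ.mulVec v = 0

/-- The quantum relative entropy `D(ρ‖σ) = Tr[ρ(log₂ρ − log₂σ)]`,
`+∞` if the support condition fails. -/
def relEnt {ι : Type} [Fintype ι] [DecidableEq ι] (ρ σ : Matrix ι ι ℂ) : EReal :=
  if suppLE ρ σ then (((ρ * (matLog2 ρ - matLog2 σ)).trace).re : EReal) else ⊤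

/-- `−log₂ x` as an extended real, with `−log₂ 0 = +∞`. -/
def negLog2 (x : ℝ) : EReal :=
  if x ≤ 0 then ⊤ else ((-Real.logb 2 x : ℝ) : EReal)

/-- The max-relative entropy `D_max(ρ‖σ) = inf{λ : ρ ≤ 2^λ σ}` (Loewner order). -/
def Dmax {ι : Type} [Fintype ι] (ρ σ : Matrix ι ι ℂ) : EReal :=
  ⨅ (l : ℝ) (_ : (((2 : ℝ) ^ l) • σ - ρ).PosSemidef), (l : EReal)

/-- The sandwiched Rényi divergence `D̃_α`. -/
def sandRenyi {ι : Type} [Fintype ι] [DecidableEq ι] (α : ℝ) (ρ σ : Matrix ι ι ℂ) : EReal :=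
  if α = 1 then relEnt ρ σ
  else if 1 < α ∧ ¬ suppLE ρ σ then ⊤
  else if α < 1 ∧ (ρ * σ).trace = 0 then ⊤
  else ((((α - 1)⁻¹ *
      Real.logb 2
        (((matPow (matPow σ ((1 - α) / (2 * α)) * ρ * matPow σ ((1 - α) / (2 * α))) α).trace).re)) :
        ℝ) : EReal)

/-- The Petz–Rényi divergence `D_α`. -/
def petzRenyi {ι : Type} [Fintype ι] [DecidableEq ι] (α : ℝ) (ρ σ : Matrix ι ι ℂ) : EReal :=
  if α = 0 then negLog2 (((suppProj ρ * σ).trace).re)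
  else if α = 1 then relEnt ρ σ
  else if 1 < α ∧ ¬ suppLE ρ σ then ⊤
  else if α < 1 ∧ (ρ * σ).trace = 0 then ⊤
  else ((((α - 1)⁻¹ * Real.logb 2 (((matPow ρ α * matPow σ (1 - α)).trace).re)) : ℝ) : EReal)

/-- The trace norm `‖X‖₁ = Tr √(XᴴX)`. -/
def traceNorm {ι : Type} [Fintype ι] [DecidableEq ι] (X : Matrix ι ι ℂ) : ℝ :=
  ((matPow (X.conjTranspose * X) (1/2 : ℝ)).trace).re

/-- The fidelity `F(ρ,σ) = ‖√ρ√σ‖₁²`. -/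
def matFidelity {ι : Type} [Fintype ι] [DecidableEq ι] (ρ σ : Matrix ι ι ℂ) : ℝ :=
  (traceNorm (matPow ρ (1/2 : ℝ) * matPow σ (1/2 : ℝ))) ^ 2

def relEntFam : DivFam := fun _ _ _ ρ σ => relEnt ρ σ
def DmaxFam : DivFam := fun _ _ _ ρ σ => Dmax ρ σ
def sandFam (α : ℝ) : DivFam := fun _ _ _ ρ σ => sandRenyi α ρ σ
def petzFam (α : ℝ) : DivFam := fun _ _ _ ρ σ => petzRenyi α ρ σ
/-- `D̃_{1/2}(ρ‖σ) = −log₂ F(ρ,σ)` as a divergence family. -/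
def fidDivFam : DivFam := fun _ _ _ ρ σ => negLog2 (matFidelity ρ σ)

/-- The classical-quantum state `Σ_x p(x) |x⟩⟨x| ⊗ ρ^x`. -/
def cqState {X ι : Type} [DecidableEq X] (p : X → ℝ) (ρ : X → Matrix ι ι ℂ) :
    Matrix (X × ι) (X × ι) ℂ :=
  fun a b => if a.1 = b.1 then (p a.1 : ℂ) * ρ a.1 a.2 b.2 else 0

/-- The direct-sum property of a generalized divergence on classical-quantum states. -/
def DivDirectSum (D : DivFam) : Prop :=
  ∀ (X ι : Type) [Fintype X] [DecidableEq X] [Fintype ι] [DecidableEq ι]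
    (p : X → ℝ), (∀ x, 0 ≤ p x) → (∑ x, p x = 1) →
    ∀ (ρ σ : X → Matrix ι ι ℂ), (∀ x, IsDensity (ρ x)) → (∀ x, IsDensity (σ x)) →
      D (X × ι) (cqState p ρ) (cqState p σ) = ∑ x, (p x : EReal) * D ι (ρ x) (σ x)

/-- The Kronecker (tensor) product of square matrices. -/
def mkron {ι E : Type} (A : Matrix ι ι ℂ) (B : Matrix E E ℂ) : Matrix (ι × E) (ι × E) ℂ :=
  fun p q => A p.1 q.1 * B p.2 q.2

/-- Sub-additivity of a divergence with respect to tensor-product states. -/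
def DivSubAdditive (D : DivFam) : Prop :=
  ∀ (ι E : Type) [Fintype ι] [DecidableEq ι] [Fintype E] [DecidableEq E]
    (ρ σ : Matrix ι ι ℂ) (ω τ : Matrix E E ℂ),
    IsDensity ρ → IsDensity σ → IsDensity ω → IsDensity τ →
      D (ι × E) (mkron ρ ω) (mkron σ τ) ≤ D ι ρ σ + D E ω τ

/-- The classical-quantum channel `ρ ↦ Σ_x ⟨x|ρ|x⟩ ν^x`. -/
def cqChannel {X κ : Type} [Fintype X] [Fintype κ] (ν : X → Matrix κ κ ℂ) :
    Matrix X X ℂ → Matrix κ κ ℂ :=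
  fun ρ => ∑ x, ρ x x • ν x

/-- The maximally entangled state of Schmidt rank `|ι|` on `ι × ι`. -/
def maxEnt (ι : Type) [Fintype ι] [DecidableEq ι] : Matrix (ι × ι) (ι × ι) ℂ :=
  fun p q => if p.1 = p.2 ∧ q.1 = q.2 then ((Fintype.card ι : ℂ))⁻¹ else 0

/-- An `(m+1)`-round adaptive channel discrimination protocol: registers `R_0, …, R_m`,
a shared initial state, adaptive channels between channel uses, and a final measurement. -/
structure Protocol (ι κ : Type) [Fintype ι] [DecidableEq ι] [Fintype κ] [DecidableEq κ]
    (m : ℕ) where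
  r : ℕ → ℕ
  init : Matrix (Fin (r 0) × ι) (Fin (r 0) × ι) ℂ
  init_density : IsDensity init
  adapt : ∀ i : ℕ, Matrix (Fin (r i) × κ) (Fin (r i) × κ) ℂ →
      Matrix (Fin (r (i + 1)) × ι) (Fin (r (i + 1)) × ι) ℂ
  adapt_channel : ∀ i, i < m → IsChannel (adapt i)
  meas : Matrix (Fin (r m) × κ) (Fin (r m) × κ) ℂ
  meas_psd : meas.PosSemidef
  meas_le_one : ((1 : Matrix (Fin (r m) × κ) (Fin (r m) × κ) ℂ) - meas).PosSemidef

namespace Protocol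

variable {ι κ : Type} [Fintype ι] [DecidableEq ι] [Fintype κ] [DecidableEq κ] {m : ℕ}

/-- The state on `R_i ⊗ A` just before the `(i+1)`-st channel use, when the channel is `Ch`. -/
def evolve (P : Protocol ι κ m) (Ch : Matrix ι ι ℂ → Matrix κ κ ℂ) :
    (i : ℕ) → Matrix (Fin (P.r i) × ι) (Fin (P.r i) × ι) ℂ
  | 0 => P.init
  | (i + 1) => P.adapt i (idTensor Ch (P.evolve Ch i))

/-- The final state on `R_m ⊗ B` after all `m + 1` channel uses. -/
def final (P : Protocol ι κ m) (Ch : Matrix ι ι ℂ → Matrix κ κ ℂ) :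
    Matrix (Fin (P.r m) × κ) (Fin (P.r m) × κ) ℂ :=
  idTensor Ch (P.evolve Ch m)

/-- The probability of accepting (deciding for the null hypothesis). -/
def acceptProb (P : Protocol ι κ m) (Ch : Matrix ι ι ℂ → Matrix κ κ ℂ) : ℝ :=
  ((P.meas * P.final Ch).trace).re

/-- The type I error probability `Tr[(I − Q) ρ'⁽ⁿ⁾]`. -/
def typeI (P : Protocol ι κ m) (N : Matrix ι ι ℂ → Matrix κ κ ℂ) : ℝ :=
  ((((1 : Matrix (Fin (P.r m) × κ) (Fin (P.r m) × κ) ℂ) - P.meas) * P.final N).trace).re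

/-- The type II error probability `Tr[Q τ'⁽ⁿ⁾]`. -/
def typeII (P : Protocol ι κ m) (M : Matrix ι ι ℂ → Matrix κ κ ℂ) : ℝ :=
  ((P.meas * P.final M).trace).re

end Protocol

/-- The binary (classical) state `diag(p, 1−p)`. -/
def binState (p : ℝ) : Matrix (Fin 2) (Fin 2) ℂ :=
  Matrix.diagonal (fun i => if i = 0 then (p : ℂ) else ((1 - p : ℝ) : ℂ))

/-- The binary entropy `h₂(ε)`. -/
def h2 (ε : ℝ) : ℝ := -(ε * Real.logb 2 ε) - (1 - ε) * Real.logb 2 (1 - ε)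

/-- `ζ_n(ε, N, M)` with `n = m + 1`: the optimal type II error exponent among all
`(m+1)`-round adaptive protocols with type I error at most `ε`. -/
def steinExp {ι κ : Type} [Fintype ι] [DecidableEq ι] [Fintype κ] [DecidableEq κ]
    (N M : Matrix ι ι ℂ → Matrix κ κ ℂ) (m : ℕ) (ε : ℝ) : EReal :=
  ⨆ (P : Protocol ι κ m) (_ : P.typeI N ≤ ε),
    (((m + 1 : ℝ))⁻¹ : EReal) * negLog2 (P.typeII M)

/-- Partial trace over the (left) reference system. -/
def ptraceLeft {R ι : Type} [Fintype R] (ψ : Matrix (R × ι) (R × ι) ℂ) : Matrix ι ι ℂ :=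
  fun a b => ∑ r, ψ (r, a) (r, b)

/-- The energy-constrained generalized channel divergence. -/
def eChannelDiv (D : DivFam) {ι κ : Type} [Fintype ι] [DecidableEq ι] [Fintype κ] [DecidableEq κ]
    (H : Matrix ι ι ℂ) (E : ℝ) (N M : Matrix ι ι ℂ → Matrix κ κ ℂ) : EReal :=
  ⨆ (R : ℕ) (ψ : Matrix (Fin R × ι) (Fin R × ι) ℂ) (_ : IsDensity ψ)
    (_ : ((H * ptraceLeft ψ).trace).re ≤ E),
      D (Fin R × κ) (idTensor N ψ) (idTensor M ψ)

/-- The energy-constrained amortized channel divergence. -/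
def eAmortizedDiv (D : DivFam) {ι κ : Type} [Fintype ι] [DecidableEq ι] [Fintype κ] [DecidableEq κ]
    (H : Matrix ι ι ℂ) (E : ℝ) (N M : Matrix ι ι ℂ → Matrix κ κ ℂ) : EReal :=
  ⨆ (R : ℕ) (ρ : Matrix (Fin R × ι) (Fin R × ι) ℂ) (σ : Matrix (Fin R × ι) (Fin R × ι) ℂ)
    (_ : IsDensity ρ) (_ : IsDensity σ)
    (_ : ((H * ptraceLeft ρ).trace).re ≤ E) (_ : ((H * ptraceLeft σ).trace).re ≤ E),
      D (Fin R × κ) (idTensor N ρ) (idTensor M σ) - D (Fin R × ι) ρ σ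

/-- `sup_α(ρ/σ)`: supremum of `Tr[Λρ]/Tr[Λσ]` over Hermitian `Λ` with `α⁻¹ I ≤ Λ ≤ I`. -/
def hilbertSup {ι : Type} [Fintype ι] [DecidableEq ι] (α : ℝ) (ρ σ : Matrix ι ι ℂ) : ℝ :=
  sSup { t : ℝ | ∃ Λ : Matrix ι ι ℂ, Λ.IsHermitian ∧
    (Λ - (α⁻¹ : ℝ) • (1 : Matrix ι ι ℂ)).PosSemidef ∧
    ((1 : Matrix ι ι ℂ) - Λ).PosSemidef ∧
    t = ((Λ * ρ).trace).re / ((Λ * σ).trace).re }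

/-- The Hilbert `α`-divergence `H_α(ρ‖σ)`, with `H₁(ρ‖σ) = ‖ρ−σ‖₁ / (2 ln 2)`. -/
def hilbertDiv {ι : Type} [Fintype ι] [DecidableEq ι] (α : ℝ) (ρ σ : Matrix ι ι ℂ) : ℝ :=
  if α = 1 then (2 * Real.log 2)⁻¹ * traceNorm (ρ - σ)
  else (α / (α - 1)) * Real.logb 2 (hilbertSup α ρ σ)

/-!
Write `A = X Xᴴ` and `B = Y Yᴴ`. Since `2 (X Xᴴ - Y Yᴴ) = (X - Y)(X + Y)ᴴ + (X + Y)(X - Y)ᴴ`,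
pairing with the partial isometry `W` of the polar decomposition of `A - B` and applying
Cauchy–Schwarz for the Hilbert–Schmidt inner product gives
`‖A - B‖₁² ≤ ‖X - Y‖₂² ‖X + Y‖₂² = (Tr A + Tr B)² - 4 (Re Tr Xᴴ Y)²`.
It remains to choose the factorizations with `Re Tr Xᴴ Y = ‖√A √B‖₁`: if `W (√A √B) = |√A √B|`
for a partial isometry `W`, take `Y = [√B, 0]` and `X = √A [Wᴴ, 1 - WᴴW]`; the second block
makes `[Wᴴ, 1 - WᴴW]` a co-isometry, so that `X Xᴴ = A`.
-/

open Matrix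
open scoped MatrixOrder

section

variable {ι : Type} [Fintype ι] [DecidableEq ι]

lemma matPow_half_eq_sqrt {A : Matrix ι ι ℂ} (hA : A.PosSemidef) :
    matPow A (1/2 : ℝ) = CFC.sqrt A := by
  rw [CFC.sqrt_eq_real_sqrt A hA.nonneg, cfcₙ_eq_cfc, hA.1.cfc_eq, IsHermitian.cfc, matPow,
    hermFun, dif_pos hA.1, Unitary.conjStarAlgAut_apply]
  congr 3
  ext i
  by_cases h : hA.1.eigenvalues i = 0
  · simp [h]
  · simp [h, Real.sqrt_eq_rpow]

lemma traceNorm_eq_re_trace_sqrt (X : Matrix ι ι ℂ) :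
    traceNorm X = (CFC.sqrt (Xᴴ * X)).trace.re := by
  rw [traceNorm, matPow_half_eq_sqrt (posSemidef_conjTranspose_mul_self X)]

lemma exists_partialIsometry_mul_eq_sqrt (Z : Matrix ι ι ℂ) :
    ∃ W : Matrix ι ι ℂ, W * Wᴴ * W = W ∧ W * Z = CFC.sqrt (Zᴴ * Z) := by
  set T := Zᴴ * Z
  have hT : 0 ≤ T := (posSemidef_conjTranspose_mul_self Z).nonneg
  have hcont (f : ℝ → ℝ) : ContinuousOn f (spectrum ℝ T) :=
    T.finite_real_spectrum.continuousOn f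
  -- `W = |Z|⁺ Zᴴ`; the pseudo-inverse `|Z|⁺` vanishes on `ker Z` because `0⁻¹ = 0`.
  set G := cfc (fun x : ℝ => (√x)⁻¹) T
  have hG : Gᴴ = G := IsSelfAdjoint.cfc
  have hGT : G * T = CFC.sqrt T :=
    calc G * T = cfc (fun x : ℝ => (√x)⁻¹ * x) T := by
          rw [cfc_mul _ _ T (hcont _) (hcont _), cfc_id' ℝ T hT.isSelfAdjoint]
      _ = cfc Real.sqrt T := cfc_congr fun x _ => by rw [inv_mul_eq_div, Real.div_sqrt]
      _ = CFC.sqrt T := by rw [CFC.sqrt_eq_real_sqrt T hT, cfcₙ_eq_cfc]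
  refine ⟨G * Zᴴ, ?_, by rw [mul_assoc, hGT]⟩
  have hsqrtGG : CFC.sqrt T * G * G = G := by
    rw [CFC.sqrt_eq_real_sqrt T hT, cfcₙ_eq_cfc, ← cfc_mul _ _ T (hcont _) (hcont _),
      ← cfc_mul _ _ T (hcont _) (hcont _)]
    refine cfc_congr fun x _ => ?_
    rcases eq_or_ne (√x) 0 with h | h
    · simp [h]
    · rw [mul_inv_cancel₀ h, one_mul]
  calc G * Zᴴ * (G * Zᴴ)ᴴ * (G * Zᴴ) = G * T * G * G * Zᴴ := by
        simp only [conjTranspose_mul, conjTranspose_conjTranspose, hG, T, mul_assoc]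
    _ = G * Zᴴ := by rw [hGT, hsqrtGG]

end

section StarRing

variable {R : Type*} [Ring R] [StarRing R] {w : R}

lemma isStarProjection_mul_star_self (hw : w * star w * w = w) :
    IsStarProjection (w * star w) where
  isIdempotentElem := by rw [IsIdempotentElem, ← mul_assoc, hw]
  isSelfAdjoint := .mul_star_self w

lemma isStarProjection_star_mul_self (hw : w * star w * w = w) :
    IsStarProjection (star w * w) := by
  simpa using isStarProjection_mul_star_self (w := star w) (by
    simpa [mul_assoc] using congrArg star hw)

end StarRing

section Trace

variable {m n : Type} [Fintype m] [Fintype n]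

lemma re_trace_conjTranspose_mul_comm (C D : Matrix m n ℂ) :
    (Dᴴ * C).trace.re = (Cᴴ * D).trace.re := by
  rw [← conjTranspose_conjTranspose (Dᴴ * C), conjTranspose_mul, conjTranspose_conjTranspose,
    trace_conjTranspose, RCLike.star_def, Complex.conj_re]

lemma re_trace_conjTranspose_mul_self_nonneg (C : Matrix m n ℂ) : 0 ≤ (Cᴴ * C).trace.re :=
  (Complex.nonneg_iff.mp (posSemidef_conjTranspose_mul_self C).trace_nonneg).1

lemma sq_re_trace_conjTranspose_mul_le (C D : Matrix m n ℂ) :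
    (Cᴴ * D).trace.re ^ 2 ≤ (Cᴴ * C).trace.re * (Dᴴ * D).trace.re := by
  have hquad (t : ℝ) : 0 ≤ (Dᴴ * D).trace.re * (t * t) + (-2 * (Cᴴ * D).trace.re) * t +
      (Cᴴ * C).trace.re := by
    have h := re_trace_conjTranspose_mul_self_nonneg (C - t • D)
    simp only [conjTranspose_sub, conjTranspose_smul, star_trivial, Matrix.sub_mul,
      Matrix.mul_sub, Matrix.smul_mul, Matrix.mul_smul, trace_sub, trace_smul, Complex.sub_re,
      Complex.smul_re, smul_eq_mul, re_trace_conjTranspose_mul_comm C D] at h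
    nlinarith
  have := discrim_le_zero hquad
  rw [discrim] at this
  nlinarith

end Trace

section Gram

variable {m n : Type} [Fintype m] [DecidableEq m] [Fintype n]

lemma sq_re_trace_mul_mul_conjTranspose_le {W : Matrix m m ℂ} (hW : W * Wᴴ ≤ 1)
    (C D : Matrix m n ℂ) :
    (W * C * Dᴴ).trace.re ^ 2 ≤ (Cᴴ * C).trace.re * (Dᴴ * D).trace.re := by
  have hWD : ((Wᴴ * D)ᴴ * (Wᴴ * D)).trace.re ≤ (Dᴴ * D).trace.re := by
    have h := (Complex.nonneg_iff.mp ((le_iff.mp hW).conjTranspose_mul_mul_same D).trace_nonneg).1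
    rw [Matrix.mul_sub, Matrix.sub_mul, trace_sub, Complex.sub_re] at h
    simpa [Matrix.mul_assoc] using h
  have htr : (W * C * Dᴴ).trace = ((Wᴴ * D)ᴴ * C).trace := by
    rw [trace_mul_comm, conjTranspose_mul, conjTranspose_conjTranspose, Matrix.mul_assoc]
  rw [htr, mul_comm]
  exact (sq_re_trace_conjTranspose_mul_le (Wᴴ * D) C).trans
    (mul_le_mul_of_nonneg_right hWD (re_trace_conjTranspose_mul_self_nonneg C))

theorem traceNorm_sub_sq_add_four_mul_sq_le (X Y : Matrix m n ℂ) :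
    traceNorm (X * Xᴴ - Y * Yᴴ) ^ 2 + 4 * (Xᴴ * Y).trace.re ^ 2 ≤
      ((Xᴴ * X).trace.re + (Yᴴ * Y).trace.re) ^ 2 := by
  set M := X * Xᴴ - Y * Yᴴ
  obtain ⟨W, hW, hWM⟩ := exists_partialIsometry_mul_eq_sqrt M
  have hWc : W * Wᴴ ≤ 1 := (isStarProjection_mul_star_self hW).le_one
  have hnorm : traceNorm M = (W * M).trace.re := by rw [traceNorm_eq_re_trace_sqrt, hWM]
  have hsplit : 2 * (W * M).trace.re =
      (W * (X - Y) * (X + Y)ᴴ).trace.re + (W * (X + Y) * (X - Y)ᴴ).trace.re := by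
    rw [← Complex.add_re, ← trace_add, Matrix.mul_assoc, Matrix.mul_assoc, ← Matrix.mul_add]
    simp only [M, conjTranspose_add, conjTranspose_sub, Matrix.sub_mul, Matrix.add_mul,
      Matrix.mul_add, Matrix.mul_sub, trace_sub, trace_add, Complex.add_re, Complex.sub_re]
    ring
  have hdiff : ((X - Y)ᴴ * (X - Y)).trace.re =
      (Xᴴ * X).trace.re + (Yᴴ * Y).trace.re - 2 * (Xᴴ * Y).trace.re := by
    simp only [conjTranspose_sub, Matrix.sub_mul, Matrix.mul_sub, trace_sub, Complex.sub_re,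
      re_trace_conjTranspose_mul_comm X Y]
    ring
  have hsum : ((X + Y)ᴴ * (X + Y)).trace.re =
      (Xᴴ * X).trace.re + (Yᴴ * Y).trace.re + 2 * (Xᴴ * Y).trace.re := by
    simp only [conjTranspose_add, Matrix.add_mul, Matrix.mul_add, trace_add, Complex.add_re,
      re_trace_conjTranspose_mul_comm X Y]
    ring
  have h₁ := sq_re_trace_mul_mul_conjTranspose_le hWc (X - Y) (X + Y)
  have h₂ := sq_re_trace_mul_mul_conjTranspose_le hWc (X + Y) (X - Y)
  rw [hdiff, hsum] at h₁ h₂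
  have hsq := congrArg (· ^ 2) hsplit
  rw [hnorm]
  nlinarith [sq_nonneg ((W * (X - Y) * (X + Y)ᴴ).trace.re - (W * (X + Y) * (X - Y)ᴴ).trace.re)]

end Gram

lemma fromCols_mul_conjTranspose_self_eq_one {n : Type} [Fintype n] [DecidableEq n]
    {W : Matrix n n ℂ} (hW : W * Wᴴ * W = W) :
    fromCols Wᴴ (1 - Wᴴ * W) * (fromCols Wᴴ (1 - Wᴴ * W))ᴴ = 1 := by
  have hP : IsStarProjection (1 - Wᴴ * W) := (isStarProjection_star_mul_self hW).one_sub
  have hPH : (1 - Wᴴ * W)ᴴ = 1 - Wᴴ * W := hP.isSelfAdjoint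
  rw [conjTranspose_fromCols_eq_fromRows_conjTranspose, fromCols_mul_fromRows,
    conjTranspose_conjTranspose, hPH, hP.isIdempotentElem.eq, add_sub_cancel]

/-- Generalized Fuchs–van de Graaf inequality: for positive semidefinite
matrices `A`, `B`, `‖A − B‖₁² + 4 ‖A^{1/2} B^{1/2}‖₁² ≤ (Tr[A + B])²`. -/
theorem generalized_fuchs_van_de_graaf
    {ι : Type} [Fintype ι] [DecidableEq ι]
    (A B : Matrix ι ι ℂ) (hA : A.PosSemidef) (hB : B.PosSemidef) :
    traceNorm (A - B) ^ 2 +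
        4 * traceNorm (matPow A (1/2 : ℝ) * matPow B (1/2 : ℝ)) ^ 2 ≤
      (((A + B).trace).re) ^ 2 := by
  rw [matPow_half_eq_sqrt hA, matPow_half_eq_sqrt hB]
  set P := CFC.sqrt A
  set Q := CFC.sqrt B
  have hP : Pᴴ = P := (CFC.sqrt_nonneg A).isSelfAdjoint
  have hQ : Qᴴ = Q := (CFC.sqrt_nonneg B).isSelfAdjoint
  obtain ⟨W, hW, hWPQ⟩ := exists_partialIsometry_mul_eq_sqrt (P * Q)
  set X := P * fromCols Wᴴ (1 - Wᴴ * W)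
  set Y := fromCols Q (0 : Matrix ι ι ℂ)
  have hX : X * Xᴴ = A := by
    rw [conjTranspose_mul, Matrix.mul_assoc, ← Matrix.mul_assoc _ _ Pᴴ,
      fromCols_mul_conjTranspose_self_eq_one hW, Matrix.one_mul, hP,
      CFC.sqrt_mul_sqrt_self A hA.nonneg]
  have hY : Y * Yᴴ = B := by
    rw [conjTranspose_fromCols_eq_fromRows_conjTranspose, fromCols_mul_fromRows, hQ,
      CFC.sqrt_mul_sqrt_self B hB.nonneg]
    simp
  have hXY : (Xᴴ * Y).trace.re = traceNorm (P * Q) := by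
    rw [traceNorm_eq_re_trace_sqrt, ← hWPQ, trace_mul_comm, conjTranspose_mul, hP,
      conjTranspose_fromCols_eq_fromRows_conjTranspose, ← Matrix.mul_assoc, fromCols_mul_fromRows,
      conjTranspose_conjTranspose, Matrix.zero_mul, add_zero, ← trace_mul_cycle, Matrix.mul_assoc]
  have := traceNorm_sub_sq_add_four_mul_sq_le X Y
  rwa [trace_mul_comm Xᴴ X, trace_mul_comm Yᴴ Y, hX, hY, hXY, ← Complex.add_re,
    ← trace_add] at this

end
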